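/- Let F_q be a finite field and let r_1,…,r_n, i_1,…,i_n be positive integers such that (x_j − 1)^{i_j} divides x_j^{r_j} − 1 in F_q[x_j] for all 1 ≤ j ≤ n. Let R′ = F_q[x_1,…,x_n]/⟨x_1^{r_1} − 1, …, x_n^{r_n} − 1⟩, let C = ⟨(x_1 − 1)^{i_1}···(x_n − 1)^{i_n}⟩ ⊆ R′, and for each j let C_{x_j} = ⟨(x_j − 1)^{i_j}⟩ ⊆ F_q[x_j]/⟨x_j^{r_j} − 1⟩. Then C is the iterated product code (⋯((C_{x_1} ⊗ C_{x_2}) ⊗ C_{x_3}) ⊗ ⋯) ⊗ C_{x_n}: writing each element of R′ as the class of its unique representative f = Σ f_{i_1,…,i_n} x_1^{i_1}···x_n^{i_n} with 0 ≤ i_j < r_j, the class of f belongs to C if and only if for every j ∈ {1,…,n} and every fixed choice of exponents of the variables other than x_j, the one-variable polynomial Σ_{i_j=0}^{r_j−1} f_{i_1,…,i_n} x_j^{i_j} represents an element of C_{x_j}. -/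

import Mathlib

/-!
Write `g = ∏ j, (X j - 1) ^ ι j` and call `f` reduced when `degreeOf j f < r j` for every `j`.
A polynomial in `X j` alone divides `f` iff it divides every coefficient of `f` viewed as a
polynomial in the other variables over `F[X_j]`, and these coefficients are the slices of `f` in
direction `j`. So it suffices that a reduced `f` lies in `⟨g⟩ + ⟨X k ^ r k - 1⟩` iff
`(X j - 1) ^ ι j ∣ f` for every `j`.

If every `(X j - 1) ^ ι j` divides `f` then so does `g`, since the `X j - 1` are pairwise
non-associated primes of the factorial ring `F[x]`. Conversely, once `X j` is moved into the
coefficients, reducing all exponents modulo `r` is `F[X_j]`-linear, fixes the reduced `f` and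
kills every multiple of `X k ^ r k - 1` with `k ≠ j`; what it leaves of
`f = a * g + ∑ k, c k * (X k ^ r k - 1)` is a multiple of `(X j - 1) ^ ι j`, which divides both
`g` and `X j ^ r j - 1`.
-/

open MvPolynomial
open scoped Polynomial

namespace MvPolynomial

section Coprime

variable {σ R : Type*} [CommRing R] [IsDomain R]

theorem prime_X_sub_C (i : σ) (a : R) : Prime (X i - C a : MvPolynomial σ R) := by
  let translate : MvPolynomial σ R ≃ₐ[R] MvPolynomial σ R :=
    AlgEquiv.ofAlgHom (aeval fun k => X k - C a) (aeval fun k => X k + C a)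
      (by ext; simp) (by ext; simp)
  have h : translate (X i) = X i - C a := by simp [translate]
  rw [← h, MulEquiv.prime_iff]
  exact X_prime

theorem isRelPrime_X_sub_C_X_sub_C {i k : σ} (hik : i ≠ k) (a b : R) :
    IsRelPrime (X i - C a : MvPolynomial σ R) (X k - C b) := by
  classical
  refine (prime_X_sub_C i a).irreducible.isRelPrime_iff_not_dvd.mpr fun h => ?_
  have := map_dvd (eval (Function.update (fun _ => b + 1) i a)) h
  simp [Function.update_of_ne hik.symm] at this

theorem prod_X_sub_C_pow_dvd [UniqueFactorizationMonoid R] (s : Finset σ) (a : σ → R)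
    (e : σ → ℕ) {f : MvPolynomial σ R} (h : ∀ i ∈ s, (X i - C (a i)) ^ e i ∣ f) :
    ∏ i ∈ s, (X i - C (a i)) ^ e i ∣ f :=
  Finset.prod_dvd_of_isRelPrime (fun _ _ _ _ hik => (isRelPrime_X_sub_C_X_sub_C hik _ _).pow) h

end Coprime

section Isolate

variable {σ R : Type*} [CommRing R] [DecidableEq σ]

/-- Moves `X j` into the coefficient ring: the coefficients of `isolate j p` are the slices of `p`
in direction `j` (see `coeff_isolate_eq_sum`). -/
noncomputable def isolate (j : σ) : MvPolynomial σ R →ₐ[R] MvPolynomial σ R[X] :=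
  aeval (Function.update X j (C Polynomial.X))

noncomputable def unisolate (j : σ) : MvPolynomial σ R[X] →+* MvPolynomial σ R :=
  eval₂Hom (Polynomial.eval₂RingHom C (X j)) X

theorem unisolate_isolate (j : σ) (p : MvPolynomial σ R) : unisolate j (isolate j p) = p := by
  suffices (unisolate j).comp (isolate (R := R) j).toRingHom = RingHom.id _ from
    RingHom.congr_fun this p
  refine ringHom_ext (fun c => by simp [isolate, unisolate]) fun k => ?_
  by_cases hk : k = j
  · subst hk; simp [isolate, unisolate]
  · simp [isolate, unisolate, Function.update_of_ne hk]

theorem isolate_aeval_X (j : σ) (q : R[X]) :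
    isolate j (Polynomial.aeval (X j) q) = (C q : MvPolynomial σ R[X]) := by
  rw [← Polynomial.aeval_algHom_apply, isolate, aeval_X, Function.update_self, ← algebraMap_eq,
    Polynomial.aeval_algebraMap_apply, Polynomial.aeval_X_left_apply]

theorem aeval_X_dvd_iff_C_dvd_isolate (j : σ) (q : R[X]) (p : MvPolynomial σ R) :
    Polynomial.aeval (X j) q ∣ p ↔ (C q : MvPolynomial σ R[X]) ∣ isolate j p := by
  refine ⟨fun h => isolate_aeval_X j q ▸ map_dvd (isolate j) h, fun h => ?_⟩
  have := map_dvd (unisolate j) h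
  rwa [unisolate_isolate, unisolate, eval₂Hom_C, Polynomial.coe_eval₂RingHom, ← algebraMap_eq,
    ← Polynomial.aeval_def] at this

theorem isolate_monomial (j : σ) (d : σ →₀ ℕ) (c : R) :
    isolate j (monomial d c) = monomial (d.update j 0) (Polynomial.monomial (d j) c) := by
  have hd : monomial d c = monomial (d.update j 0) c * X j ^ d j := by
    rw [X_pow_eq_monomial, monomial_mul, mul_one, ← Finsupp.erase_eq_update_zero,
      Finsupp.erase_add_single]
  have he : isolate j (monomial (d.update j 0) c) = monomial (d.update j 0) (Polynomial.C c) := by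
    rw [isolate, aeval_monomial, monomial_eq, algebraMap_apply, Polynomial.algebraMap_eq]
    congr 1
    refine Finsupp.prod_congr fun k hk => ?_
    rw [Function.update_of_ne (by rintro rfl; simp at hk)]
  rw [hd, map_mul, map_pow, he, isolate, aeval_X, Function.update_self, ← C_pow, mul_comm,
    C_mul_monomial, ← Polynomial.C_mul_X_pow_eq_monomial, mul_comm]

theorem coeff_coeff_isolate (j : σ) (p : MvPolynomial σ R) (m : σ →₀ ℕ) (t : ℕ) :
    ((isolate j p).coeff m).coeff t = if m j = 0 then p.coeff (m.update j t) else 0 := by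
  induction p using induction_on' with
  | monomial d c =>
    have key : d.update j 0 = m ∧ d j = t ↔ m j = 0 ∧ d = m.update j t := by
      constructor
      · rintro ⟨rfl, rfl⟩
        simp
      · rintro ⟨hm, rfl⟩
        simp [← hm]
    rw [isolate_monomial, coeff_monomial, coeff_monomial]
    split_ifs <;> simp_all [Polynomial.coeff_monomial]
  | add p q hp hq =>
    simp only [map_add, coeff_add, Polynomial.coeff_add, hp, hq]
    split_ifs <;> simp

theorem coeff_isolate_eq_sum {j : σ} {p : MvPolynomial σ R} {N : ℕ} (hp : degreeOf j p < N)
    {m : σ →₀ ℕ} (hm : m j = 0) :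
    (isolate j p).coeff m =
      ∑ t ∈ Finset.range N, Polynomial.C (p.coeff (m.update j t)) * Polynomial.X ^ t := by
  ext t
  simp only [coeff_coeff_isolate, if_pos hm, Polynomial.finsetSum_coeff,
    Polynomial.coeff_C_mul_X_pow, Finset.sum_ite_eq, Finset.mem_range]
  split_ifs with ht
  · rfl
  · exact notMem_support_iff.mp (notMem_support_of_degreeOf_lt j (by simp; omega))

theorem C_dvd_isolate_iff {r : σ → ℕ} {p : MvPolynomial σ R} (hp : ∀ k, degreeOf k p < r k)
    (j : σ) (q : R[X]) :
    C q ∣ isolate j p ↔ ∀ m : σ →₀ ℕ, (∀ k ≠ j, m k < r k) →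
      q ∣ ∑ t ∈ Finset.range (r j),
        Polynomial.C (p.coeff (m.update j t)) * Polynomial.X ^ t := by
  rw [C_dvd_iff_dvd_coeff]
  refine ⟨fun h m _ => ?_, fun h m => ?_⟩
  · simpa [coeff_isolate_eq_sum (hp j) (m := m.update j 0) (by simp)] using h (m.update j 0)
  by_cases hm : m j = 0 ∧ ∀ k ≠ j, m k < r k
  · rw [coeff_isolate_eq_sum (hp j) hm.1]
    exact h m hm.2
  convert dvd_zero q
  ext t
  rw [coeff_coeff_isolate, Polynomial.coeff_zero]
  split_ifs with hmj
  · obtain ⟨k, hkj, hk⟩ : ∃ k ≠ j, r k ≤ m k := by simpa [hmj] using hm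
    exact notMem_support_iff.mp (notMem_support_of_degreeOf_lt k (by simp [hkj]; linarith [hp k]))
  · rfl

end Isolate

section Reduction

variable {σ R : Type*} [CommRing R] (r : σ → ℕ)

noncomputable def modExponents (d : σ →₀ ℕ) : σ →₀ ℕ :=
  Finsupp.onFinset d.support (fun k => d k % r k) fun k hk => by
    rw [Finsupp.mem_support_iff]
    intro h
    simp [h] at hk

noncomputable def reduceExponents : MvPolynomial σ R →ₗ[R] MvPolynomial σ R :=
  AddMonoidAlgebra.mapDomainLinearMap R R (modExponents r)

variable {r}

theorem reduceExponents_monomial (d : σ →₀ ℕ) (c : R) :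
    reduceExponents r (monomial d c) = monomial (modExponents r d) c := by
  simp [reduceExponents, ← single_eq_monomial]

theorem reduceExponents_eq_self {p : MvPolynomial σ R}
    (hp : ∀ d ∈ p.support, ∀ k, d k < r k) : reduceExponents r p = p := by
  conv_lhs => rw [p.as_sum]
  rw [map_sum]
  conv_rhs => rw [p.as_sum]
  refine Finset.sum_congr rfl fun d hd => ?_
  have hmod : modExponents r d = d := by
    ext k
    simp [modExponents, Nat.mod_eq_of_lt (hp d hd k)]
  rw [reduceExponents_monomial, hmod]

theorem reduceExponents_mul_X_pow_sub_one (k : σ) (u : MvPolynomial σ R) :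
    reduceExponents r (u * (X k ^ r k - 1)) = 0 := by
  induction u using induction_on' with
  | monomial d c =>
    have hmod : modExponents r (d + Finsupp.single k (r k)) = modExponents r d := by
      ext i
      by_cases hi : i = k
      · subst hi; simp [modExponents]
      · simp [modExponents, Ne.symm hi]
    rw [mul_sub, mul_one, X_pow_eq_monomial, monomial_mul, mul_one, map_sub,
      reduceExponents_monomial, reduceExponents_monomial, hmod, sub_self]
  | add p q hp hq => rw [add_mul, map_add, hp, hq, add_zero]

end Reduction

section Divisibility

variable {σ R : Type*} [CommRing R] [DecidableEq σ] {r : σ → ℕ}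

theorem reduceExponents_isolate {f : MvPolynomial σ R} (hf : ∀ k, degreeOf k f < r k) (j : σ) :
    reduceExponents r (isolate j f) = isolate j f := by
  refine reduceExponents_eq_self fun d hd k => ?_
  obtain ⟨t, ht⟩ := not_forall.mp (mt Polynomial.ext (mem_support_iff.mp hd))
  rw [coeff_coeff_isolate] at ht
  split_ifs at ht with hdj
  · by_cases hkj : k = j
    · exact hkj ▸ hdj ▸ (Nat.zero_le _).trans_lt (hf j)
    · have := le_degreeOf_of_mem_support k (mem_support_iff.mpr ht)
      rw [Finsupp.update_apply, if_neg hkj] at this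
      exact this.trans_lt (hf k)
  · exact absurd rfl ht

theorem aeval_X_dvd_of_mem_sup [Fintype σ] {j : σ} {q : R[X]} (hq : q ∣ Polynomial.X ^ r j - 1)
    {f : MvPolynomial σ R} (hf : ∀ k, degreeOf k f < r k)
    (hmem : f ∈ Ideal.span {Polynomial.aeval (X j) q} ⊔
      Ideal.span (Set.range fun k => X k ^ r k - 1)) :
    Polynomial.aeval (X j) q ∣ f := by
  rw [aeval_X_dvd_iff_C_dvd_isolate, ← reduceExponents_isolate hf]
  obtain ⟨y, hy, z, hz, rfl⟩ := Submodule.mem_sup.mp hmem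
  obtain ⟨a, rfl⟩ := Ideal.mem_span_singleton'.mp hy
  obtain ⟨c, rfl⟩ := (Submodule.mem_span_range_iff_exists_fun _).mp hz
  simp only [map_add, map_sum, smul_eq_mul, map_mul, isolate_aeval_X]
  refine dvd_add ?_ (Finset.dvd_sum fun k _ => ?_)
  · rw [mul_comm, C_mul', map_smul, ← C_mul']
    exact dvd_mul_right _ _
  by_cases hkj : k = j
  · subst hkj
    have : (X k ^ r k - 1 : MvPolynomial σ R) =
        Polynomial.aeval (X k) (Polynomial.X ^ r k - 1 : R[X]) := by
      simp
    rw [this, isolate_aeval_X, mul_comm, C_mul', map_smul, ← C_mul']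
    exact (map_dvd C hq).mul_right _
  · have : isolate j (X k ^ r k - 1 : MvPolynomial σ R) = X k ^ r k - 1 := by
      simp [isolate, Function.update_of_ne hkj]
    rw [this, reduceExponents_mul_X_pow_sub_one]
    exact dvd_zero _

end Divisibility

theorem mem_span_prod_sup_iff_forall_dvd {σ K : Type*} [Fintype σ] [DecidableEq σ] [CommRing K]
    [IsDomain K] [UniqueFactorizationMonoid K]
    {r ι : σ → ℕ} (hdvd : ∀ j, (Polynomial.X - 1 : K[X]) ^ ι j ∣ Polynomial.X ^ r j - 1)
    {f : MvPolynomial σ K} (hf : ∀ k, degreeOf k f < r k) :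
    f ∈ Ideal.span {∏ j, (X j - 1) ^ ι j} ⊔ Ideal.span (Set.range fun j => X j ^ r j - 1) ↔
      ∀ j, (X j - 1) ^ ι j ∣ f := by
  refine ⟨fun h j => ?_, fun h => Ideal.mem_sup_left (Ideal.mem_span_singleton.mpr ?_)⟩
  · have hle : Ideal.span {∏ j, (X j - 1 : MvPolynomial σ K) ^ ι j} ≤
        Ideal.span {Polynomial.aeval (X j) ((Polynomial.X - 1 : K[X]) ^ ι j)} := by
      simpa using Ideal.span_singleton_le_span_singleton.mpr
        (Finset.dvd_prod_of_mem (fun j => (X j - 1 : MvPolynomial σ K) ^ ι j) (Finset.mem_univ j))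
    simpa using aeval_X_dvd_of_mem_sup (hdvd j) hf (sup_le_sup_right hle _ h)
  · simpa using
      prod_X_sub_C_pow_dvd Finset.univ (fun _ => (1 : K)) ι fun j _ => by simpa using h j

end MvPolynomial

theorem Ideal.Quotient.mk_mem_span_singleton_mk_iff {A : Type*} [CommRing A] {J : Ideal A}
    {a : A} (hJ : J ≤ Ideal.span {a}) (s : A) :
    Ideal.Quotient.mk J s ∈ Ideal.span {Ideal.Quotient.mk J a} ↔ a ∣ s := by
  rw [← Set.image_singleton, ← Ideal.map_span, Ideal.mem_quotient_iff_mem_sup,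
    sup_eq_left.mpr hJ, Ideal.mem_span_singleton]

theorem stmt_6_general (F : Type) [Field F]
    (n : ℕ) (r ι : Fin n → ℕ)
    (hdvd : ∀ j, (Polynomial.X - 1) ^ ι j ∣ (Polynomial.X ^ r j - 1 : Polynomial F))
    (I : Ideal (MvPolynomial (Fin n) F))
    (hI : I = Ideal.span (Set.range fun j : Fin n => X j ^ r j - 1))
    (C : Ideal (MvPolynomial (Fin n) F ⧸ I))
    (hC : C = Ideal.span {Ideal.Quotient.mk I (∏ j : Fin n, (X j - 1) ^ ι j)})
    (Ix : Fin n → Ideal (Polynomial F))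
    (hIx : ∀ j, Ix j = Ideal.span {Polynomial.X ^ r j - 1})
    (Cx : (j : Fin n) → Ideal (Polynomial F ⧸ Ix j))
    (hCx : ∀ j, Cx j = Ideal.span {Ideal.Quotient.mk (Ix j) ((Polynomial.X - 1) ^ ι j)})
    (f : MvPolynomial (Fin n) F) (hf : ∀ j, degreeOf j f < r j) :
    Ideal.Quotient.mk I f ∈ C ↔
      ∀ j : Fin n, ∀ m : Fin n →₀ ℕ, (∀ j' ≠ j, m j' < r j') →
        Ideal.Quotient.mk (Ix j)
          (∑ t ∈ Finset.range (r j),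
            Polynomial.C (coeff (Finsupp.update m j t) f) * Polynomial.X ^ t) ∈ Cx j := by
  subst hI hC
  rw [← Set.image_singleton, ← Ideal.map_span, Ideal.mem_quotient_iff_mem_sup,
    mem_span_prod_sup_iff_forall_dvd hdvd hf]
  refine forall_congr' fun j => ?_
  have hIx_le : Ix j ≤ Ideal.span {(Polynomial.X - 1) ^ ι j} :=
    hIx j ▸ Ideal.span_singleton_le_span_singleton.mpr (hdvd j)
  simp only [hCx j, Ideal.Quotient.mk_mem_span_singleton_mk_iff hIx_le]
  rw [← C_dvd_isolate_iff hf, ← aeval_X_dvd_iff_C_dvd_isolate]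
  simp

/-- The multivariate monomial-like code `⟨(x₁−1)^{i₁}⋯(x_n−1)^{i_n}⟩ ⊆ F_q[x]/⟨x_j^{r_j}−1⟩`
is the iterated product of the one-variable codes `C_{x_j} = ⟨(x_j−1)^{i_j}⟩`:
a (degree-bounded) representative `f` gives a codeword iff for every variable `x_j` and every
fixed choice of the remaining exponents, the corresponding one-variable polynomial in `x_j`
represents an element of `C_{x_j}`. -/
theorem stmt_6 (F : Type) [Field F] [Fintype F]
    (n : ℕ) (r ι : Fin n → ℕ) (hr : ∀ j, 0 < r j) (hι : ∀ j, 0 < ι j)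
    (hdvd : ∀ j, (Polynomial.X - 1) ^ ι j ∣ (Polynomial.X ^ r j - 1 : Polynomial F))
    (I : Ideal (MvPolynomial (Fin n) F))
    (hI : I = Ideal.span (Set.range fun j : Fin n => X j ^ r j - 1))
    (C : Ideal (MvPolynomial (Fin n) F ⧸ I))
    (hC : C = Ideal.span {Ideal.Quotient.mk I (∏ j : Fin n, (X j - 1) ^ ι j)})
    (Ix : Fin n → Ideal (Polynomial F))
    (hIx : ∀ j, Ix j = Ideal.span {Polynomial.X ^ r j - 1})
    (Cx : (j : Fin n) → Ideal (Polynomial F ⧸ Ix j))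
    (hCx : ∀ j, Cx j = Ideal.span {Ideal.Quotient.mk (Ix j) ((Polynomial.X - 1) ^ ι j)})
    (f : MvPolynomial (Fin n) F) (hf : ∀ j, degreeOf j f < r j) :
    Ideal.Quotient.mk I f ∈ C ↔
      ∀ j : Fin n, ∀ m : Fin n →₀ ℕ, (∀ j' ≠ j, m j' < r j') →
        Ideal.Quotient.mk (Ix j)
          (∑ t ∈ Finset.range (r j),
            Polynomial.C (coeff (Finsupp.update m j t) f) * Polynomial.X ^ t) ∈ Cx j :=
  stmt_6_general F n r ι hdvd I hI C hC Ix hIx Cx hCx f hf
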